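/- The operator norm of Π₊(ξ)Π₋(η) is bounded by a constant times (angle(ξ,η) + ⟨ξ⟩⁻¹ + ⟨η⟩⁻¹) for all nonzero ξ, η ∈ ℝ², where angle(ξ,η) denotes the angle between ξ and η. -/

import Mathlib

open Complex Matrix

noncomputable def diracBeta : Matrix (Fin 2) (Fin 2) ℂ := !![1, 0; 0, -1]

noncomputable def diracAlpha1 : Matrix (Fin 2) (Fin 2) ℂ :=
  !![1, 0; 0, -1] * !![0, 1; -1, 0]

noncomputable def diracAlpha2 : Matrix (Fin 2) (Fin 2) ℂ :=
  !![1, 0; 0, -1] * !![0, -I; -I, 0]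

/-- ξ·α + β. -/
noncomputable def diracM (ξ₁ ξ₂ : ℝ) : Matrix (Fin 2) (Fin 2) ℂ :=
  (ξ₁ : ℂ) • diracAlpha1 + (ξ₂ : ℂ) • diracAlpha2 + diracBeta

/-- ⟨ξ⟩ = √(|ξ|²+1). -/
noncomputable def jap (ξ₁ ξ₂ : ℝ) : ℝ := Real.sqrt (ξ₁ ^ 2 + ξ₂ ^ 2 + 1)

/-- Π₊(ξ) = (1/2)(I − ⟨ξ⟩⁻¹(ξ·α+β)). -/
noncomputable def PiPlus (ξ₁ ξ₂ : ℝ) : Matrix (Fin 2) (Fin 2) ℂ :=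
  (1 / 2 : ℂ) • ((1 : Matrix (Fin 2) (Fin 2) ℂ) - ((jap ξ₁ ξ₂)⁻¹ : ℝ) • diracM ξ₁ ξ₂)

/-- Π₋(ξ) = (1/2)(I + ⟨ξ⟩⁻¹(ξ·α+β)). -/
noncomputable def PiMinus (ξ₁ ξ₂ : ℝ) : Matrix (Fin 2) (Fin 2) ℂ :=
  (1 / 2 : ℂ) • ((1 : Matrix (Fin 2) (Fin 2) ℂ) + ((jap ξ₁ ξ₂)⁻¹ : ℝ) • diracM ξ₁ ξ₂)


open scoped Matrix.Norms.L2Operator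

/-- The angle between two nonzero vectors in ℝ². -/
noncomputable def angle2 (ξ₁ ξ₂ η₁ η₂ : ℝ) : ℝ :=
  Real.arccos ((ξ₁ * η₁ + ξ₂ * η₂) /
    (Real.sqrt (ξ₁ ^ 2 + ξ₂ ^ 2) * Real.sqrt (η₁ ^ 2 + η₂ ^ 2)))

/-! `N(ξ) := ⟨ξ⟩⁻¹ (ξ·α + β)` is a Hermitian involution, so `Π₊(ξ) = (1 - N(ξ))/2` has norm at
most `1` and kills `1 + N(ξ)`; hence `Π₊(ξ) Π₋(η) = ½ Π₊(ξ) (N(η) - N(ξ))`. Identifying `ξ` with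
`z ∈ ℂ`, `N(ξ)` is the Pauli matrix of the unit vector `(z, 1)/⟨z⟩ ∈ ℝ³`, and the operator norm of a
Pauli matrix is the Euclidean length of its vector. So `‖N(η) - N(ξ)‖` is at most
`|w/⟨w⟩ - z/⟨z⟩| + |⟨w⟩⁻¹ - ⟨z⟩⁻¹|`. Since `⟨z⟩ - |z| ≤ 1`, the point `z/⟨z⟩` lies within `⟨z⟩⁻¹`
of `z/|z|`, and the chord `|w/|w| - z/|z||` is at most the angle. This gives the bound with `C = 1`.
-/

open InnerProductGeometry

section Projection

variable {A : Type*} [NormedRing A] [NormedAlgebra ℂ A] [NormOneClass A]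

lemma norm_half_one_sub_mul_half_one_add_le {N M : A} (hN : N * N = 1) (hN_le : ‖N‖ ≤ 1) :
    ‖(1 / 2 : ℂ) • (1 - N) * (1 / 2 : ℂ) • (1 + M)‖ ≤ ‖M - N‖ / 2 := by
  have hfactor : (1 - N) * (1 + M) = (1 - N) * (M - N) := by
    calc (1 - N) * (1 + M) = (1 - N * N) + (1 - N) * (M - N) := by noncomm_ring
      _ = (1 - N) * (M - N) := by rw [hN, sub_self, zero_add]
  have h_le_two : ‖1 - N‖ ≤ 2 := by
    calc ‖1 - N‖ ≤ ‖(1 : A)‖ + ‖N‖ := norm_sub_le _ _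
      _ ≤ 2 := by rw [norm_one]; linarith
  rw [smul_mul_smul_comm, hfactor, norm_smul]
  calc ‖(1 / 2 * (1 / 2) : ℂ)‖ * ‖(1 - N) * (M - N)‖
      ≤ 1 / 4 * (‖1 - N‖ * ‖M - N‖) := by
        norm_num
        exact norm_mul_le _ _
    _ ≤ 1 / 4 * (2 * ‖M - N‖) := by gcongr
    _ = ‖M - N‖ / 2 := by ring

end Projection

/-- `x σ₁ + y σ₂ + t σ₃` for `z = x + iy`, where `σᵢ` are the Pauli matrices. -/
def pauliMat (z : ℂ) (t : ℝ) : Matrix (Fin 2) (Fin 2) ℂ := !![t, star z; z, -t]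

lemma pauliMat_conjTranspose (z : ℂ) (t : ℝ) : (pauliMat z t)ᴴ = pauliMat z t := by
  ext i j; fin_cases i <;> fin_cases j <;> simp [pauliMat]

lemma pauliMat_mul_self (z : ℂ) (t : ℝ) :
    pauliMat z t * pauliMat z t = ((‖z‖ ^ 2 + t ^ 2 : ℝ) : ℂ) • 1 := by
  ext i j; fin_cases i <;> fin_cases j <;>
    simp [pauliMat, Matrix.mul_apply, Complex.conj_mul', Complex.mul_conj'] <;> ring

lemma norm_pauliMat (z : ℂ) (t : ℝ) : ‖pauliMat z t‖ = √(‖z‖ ^ 2 + t ^ 2) := by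
  have h := l2_opNorm_conjTranspose_mul_self (pauliMat z t)
  rw [pauliMat_conjTranspose, pauliMat_mul_self, norm_smul, norm_one, mul_one, Complex.norm_real,
    Real.norm_of_nonneg (by positivity)] at h
  rw [h, Real.sqrt_mul_self (norm_nonneg _)]

lemma pauliMat_sub (z w : ℂ) (t s : ℝ) :
    pauliMat z t - pauliMat w s = pauliMat (z - w) (t - s) := by
  ext i j; fin_cases i <;> fin_cases j <;> simp [pauliMat]; ring

lemma real_smul_pauliMat (r : ℝ) (z : ℂ) (t : ℝ) : r • pauliMat z t = pauliMat (r • z) (r * t) := by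
  ext i j; fin_cases i <;> fin_cases j <;> simp [pauliMat]

lemma pauliMat_mul_self_eq_one {z : ℂ} {t : ℝ} (h : ‖z‖ ^ 2 + t ^ 2 = 1) :
    pauliMat z t * pauliMat z t = 1 := by
  rw [pauliMat_mul_self, h, Complex.ofReal_one, one_smul]

lemma norm_pauliMat_eq_one {z : ℂ} {t : ℝ} (h : ‖z‖ ^ 2 + t ^ 2 = 1) : ‖pauliMat z t‖ = 1 := by
  rw [norm_pauliMat, h, Real.sqrt_one]

lemma norm_pauliMat_le (z : ℂ) (t : ℝ) : ‖pauliMat z t‖ ≤ ‖z‖ + |t| := by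
  rw [norm_pauliMat, Real.sqrt_le_iff]
  refine ⟨by positivity, ?_⟩
  nlinarith [sq_abs t, abs_nonneg t, norm_nonneg z]

lemma norm_inv_smul_sub_inv_norm_smul_le {E : Type*} [NormedAddCommGroup E] [NormedSpace ℝ E]
    (x : E) {r : ℝ} (hr : ‖x‖ ≤ r) (hr' : r ≤ ‖x‖ + 1) : ‖r⁻¹ • x - ‖x‖⁻¹ • x‖ ≤ r⁻¹ := by
  rcases eq_or_ne x 0 with rfl | hx
  · rw [norm_zero] at hr
    simpa using inv_nonneg.2 hr
  have hx₀ : 0 < ‖x‖ := norm_pos_iff.2 hx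
  rw [← sub_smul, norm_smul, Real.norm_eq_abs, abs_of_nonpos (sub_nonpos.2 (inv_anti₀ hx₀ hr)),
    neg_sub, sub_mul, inv_mul_cancel₀ hx₀.ne']
  have : 1 ≤ r⁻¹ * (‖x‖ + 1) :=
    calc 1 = r⁻¹ * r := (inv_mul_cancel₀ (hx₀.trans_le hr).ne').symm
      _ ≤ r⁻¹ * (‖x‖ + 1) := by gcongr; exact inv_nonneg.2 (hx₀.le.trans hr)
  linarith

lemma norm_inv_smul_sub_inv_smul_le_angle {z w : ℂ} (hz : z ≠ 0) (hw : w ≠ 0) {r s : ℝ}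
    (hr : ‖z‖ ≤ r) (hr' : r ≤ ‖z‖ + 1) (hs : ‖w‖ ≤ s) (hs' : s ≤ ‖w‖ + 1) :
    ‖s⁻¹ • w - r⁻¹ • z‖ ≤ angle z w + r⁻¹ + s⁻¹ := by
  have hchord : ‖‖w‖⁻¹ • w - ‖z‖⁻¹ • z‖ ≤ angle z w :=
    calc _ ≤ angle (‖w‖⁻¹ • w) (‖z‖⁻¹ • z) :=
          Complex.norm_sub_le_angle (norm_smul_inv_norm (𝕜 := ℝ) hw) (norm_smul_inv_norm (𝕜 := ℝ) hz)
      _ = angle z w := by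
          rw [angle_smul_left_of_pos _ _ (by positivity), angle_smul_right_of_pos _ _ (by positivity),
            angle_comm]
  have hz_tail := norm_inv_smul_sub_inv_norm_smul_le z hr hr'
  have hw_tail := norm_inv_smul_sub_inv_norm_smul_le w hs hs'
  rw [norm_sub_rev] at hz_tail
  calc ‖s⁻¹ • w - r⁻¹ • z‖
      ≤ ‖s⁻¹ • w - ‖z‖⁻¹ • z‖ + ‖‖z‖⁻¹ • z - r⁻¹ • z‖ := norm_sub_le_norm_sub_add_norm_sub _ _ _
    _ ≤ ‖s⁻¹ • w - ‖w‖⁻¹ • w‖ + ‖‖w‖⁻¹ • w - ‖z‖⁻¹ • z‖ + ‖‖z‖⁻¹ • z - r⁻¹ • z‖ := by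
        gcongr; exact norm_sub_le_norm_sub_add_norm_sub _ _ _
    _ ≤ s⁻¹ + angle z w + r⁻¹ := by gcongr
    _ = angle z w + r⁻¹ + s⁻¹ := by ring

lemma diracM_eq_pauliMat (ξ₁ ξ₂ : ℝ) : diracM ξ₁ ξ₂ = pauliMat (ξ₁ + ξ₂ * I) 1 := by
  ext i j; fin_cases i <;> fin_cases j <;>
    simp [pauliMat, diracM, diracAlpha1, diracAlpha2, diracBeta]

lemma angle2_eq_angle (ξ₁ ξ₂ η₁ η₂ : ℝ) :
    angle2 ξ₁ ξ₂ η₁ η₂ = angle (ξ₁ + ξ₂ * I : ℂ) (η₁ + η₂ * I) := by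
  rw [angle2, InnerProductGeometry.angle, Complex.inner, norm_add_mul_I, norm_add_mul_I]
  congr 2
  simp; ring

lemma sq_jap (ξ₁ ξ₂ : ℝ) : jap ξ₁ ξ₂ ^ 2 = ‖(ξ₁ + ξ₂ * I : ℂ)‖ ^ 2 + 1 := by
  rw [jap, norm_add_mul_I, Real.sq_sqrt (by positivity), Real.sq_sqrt (by positivity)]

lemma jap_pos (ξ₁ ξ₂ : ℝ) : 0 < jap ξ₁ ξ₂ := Real.sqrt_pos.2 (by positivity)

lemma norm_le_jap (ξ₁ ξ₂ : ℝ) : ‖(ξ₁ + ξ₂ * I : ℂ)‖ ≤ jap ξ₁ ξ₂ := by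
  nlinarith [sq_jap ξ₁ ξ₂, norm_nonneg (ξ₁ + ξ₂ * I : ℂ), (jap_pos ξ₁ ξ₂).le]

lemma jap_le_norm_add_one (ξ₁ ξ₂ : ℝ) : jap ξ₁ ξ₂ ≤ ‖(ξ₁ + ξ₂ * I : ℂ)‖ + 1 := by
  nlinarith [sq_jap ξ₁ ξ₂, norm_nonneg (ξ₁ + ξ₂ * I : ℂ), (jap_pos ξ₁ ξ₂).le]

lemma norm_inv_jap_smul_sq_add_sq (ξ₁ ξ₂ : ℝ) :
    ‖(jap ξ₁ ξ₂)⁻¹ • (ξ₁ + ξ₂ * I : ℂ)‖ ^ 2 + (jap ξ₁ ξ₂)⁻¹ ^ 2 = 1 := by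
  rw [norm_smul, Real.norm_of_nonneg (inv_nonneg.2 (jap_pos ξ₁ ξ₂).le)]
  calc ((jap ξ₁ ξ₂)⁻¹ * ‖(ξ₁ + ξ₂ * I : ℂ)‖) ^ 2 + (jap ξ₁ ξ₂)⁻¹ ^ 2
      = (jap ξ₁ ξ₂ ^ 2)⁻¹ * (‖(ξ₁ + ξ₂ * I : ℂ)‖ ^ 2 + 1) := by ring
    _ = 1 := by rw [← sq_jap]; exact inv_mul_cancel₀ (pow_pos (jap_pos ξ₁ ξ₂) 2).ne'

lemma inv_jap_smul_diracM (ξ₁ ξ₂ : ℝ) :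
    (jap ξ₁ ξ₂)⁻¹ • diracM ξ₁ ξ₂ = pauliMat ((jap ξ₁ ξ₂)⁻¹ • (ξ₁ + ξ₂ * I)) (jap ξ₁ ξ₂)⁻¹ := by
  rw [diracM_eq_pauliMat, real_smul_pauliMat, mul_one]

theorem PiPlus_PiMinus_null_structure :
    ∃ C > 0, ∀ ξ₁ ξ₂ η₁ η₂ : ℝ, (ξ₁, ξ₂) ≠ (0, 0) → (η₁, η₂) ≠ (0, 0) →
      ‖PiPlus ξ₁ ξ₂ * PiMinus η₁ η₂‖
        ≤ C * (angle2 ξ₁ ξ₂ η₁ η₂ + (jap ξ₁ ξ₂)⁻¹ + (jap η₁ η₂)⁻¹) := by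
  refine ⟨1, one_pos, fun ξ₁ ξ₂ η₁ η₂ hξ hη => ?_⟩
  have hz : (ξ₁ + ξ₂ * I : ℂ) ≠ 0 := by simpa [Complex.ext_iff] using hξ
  have hw : (η₁ + η₂ * I : ℂ) ≠ 0 := by simpa [Complex.ext_iff] using hη
  have hj := jap_pos ξ₁ ξ₂
  have hk := jap_pos η₁ η₂
  rw [PiPlus, PiMinus, inv_jap_smul_diracM, inv_jap_smul_diracM, angle2_eq_angle]
  set z : ℂ := ξ₁ + ξ₂ * I
  set w : ℂ := η₁ + η₂ * I
  set j := jap ξ₁ ξ₂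
  set k := jap η₁ η₂
  have hjk : |k⁻¹ - j⁻¹| ≤ j⁻¹ + k⁻¹ := by
    rw [abs_sub_le_iff]; constructor <;> linarith [inv_pos.2 hj, inv_pos.2 hk]
  calc _ ≤ ‖pauliMat (k⁻¹ • w) k⁻¹ - pauliMat (j⁻¹ • z) j⁻¹‖ / 2 :=
        norm_half_one_sub_mul_half_one_add_le
          (pauliMat_mul_self_eq_one (norm_inv_jap_smul_sq_add_sq ξ₁ ξ₂))
          (norm_pauliMat_eq_one (norm_inv_jap_smul_sq_add_sq ξ₁ ξ₂)).le
    _ ≤ (‖k⁻¹ • w - j⁻¹ • z‖ + |k⁻¹ - j⁻¹|) / 2 := by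
        rw [pauliMat_sub]; gcongr; exact norm_pauliMat_le _ _
    _ ≤ ((angle z w + j⁻¹ + k⁻¹) + (j⁻¹ + k⁻¹)) / 2 := by
        gcongr
        exact norm_inv_smul_sub_inv_smul_le_angle hz hw (norm_le_jap ξ₁ ξ₂)
          (jap_le_norm_add_one ξ₁ ξ₂) (norm_le_jap η₁ η₂) (jap_le_norm_add_one η₁ η₂)
    _ ≤ 1 * (angle z w + j⁻¹ + k⁻¹) := by linarith [angle_nonneg z w]
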